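/- arXiv:math/0201017 — 3 statements merged into one kernel-verified Lean document; each statement's English description precedes it below -/
import Mathlib

section
/- Let Γ be a finite set of labels with a fusion rule N : Γ → Γ → Γ → ℕ, a dimension function d : Γ → ℂ satisfying d(X)d(Y) = ∑_Z N(X,Y,Z) d(Z), and an S-function S : Γ → Γ → ℂ satisfying the Verlinde-type relation S(X,Y)·S(X,Z) = d(X)·∑_W N(Y,Z,W)·S(X,W) for all X,Y,Z ∈ Γ, with d(X) ≠ 0 for all X. Suppose K ⊆ Γ is closed under fusion (X,Y ∈ K and N(X,Y,Z) ≠ 0 implies Z ∈ K) and under duality, with dual satisfying N(Y,Z,W) = N(W̄,Z,Ȳ) and d(Ȳ)=d(Y). Then for every X ∈ Γ we have (∑_{Y∈K} d(Y)·S(X,Y)) · (S(X,Z) − d(X)·d(Z)) = 0 for all Z ∈ K. -/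
/-!
Put `T = ∑_{Y ∈ K} d(Y) S(X,Y)` and `T' = ∑_{Y ∈ K} d(Y) S(X,Ȳ)`. Expanding `S(X,Ȳ) S(X,B)` by the
Verlinde relation, the twisted dimension identity `∑_{U ∈ K} d(U) N(Ū,B,W) = d(B) d(W)` gives
`T' · S(X,B) = d(X) d(B) T` for `B ∈ K`. Since `d(Ȳ) = d(Y)`, this yields `T'² = T' T`, so either
`T' = 0`, forcing `T = 0`, or `T' = T`, which is the claim.

The twisted identity follows from `N(Ū,Z,W) = N(V,Z,U)` for a suitable iterated dual `V` of `W`,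
obtained from the duality symmetry `N(Y,Z,W) = N(W̄,Z,Ȳ)`: applying it twice shows that two
dualities leave `N` unchanged, and since `Γ` is finite some even iterate of duality absorbs `V̄ ↦ W`.
-/

open Finset

section FusionData

variable {Γ : Type*} (N : Γ → Γ → Γ → ℕ) (bar : Γ → Γ)

theorem fusion_eq_iterate_two_mul (hNbar : ∀ Y Z W, N Y Z W = N (bar W) Z (bar Y))
    (k : ℕ) (A Z B : Γ) : N A Z B = N (bar^[2 * k] A) Z (bar^[2 * k] B) := by
  induction k generalizing A B with
  | zero => rfl
  | succ k ih =>
    rw [Nat.mul_succ, Function.iterate_add_apply, Function.iterate_add_apply, ← ih,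
      hNbar A, hNbar (bar B)]
    rfl

theorem fusion_congr_of_iterate_two_mul_eq (hNbar : ∀ Y Z W, N Y Z W = N (bar W) Z (bar Y))
    {k : ℕ} {B B' : Γ} (h : bar^[2 * k] B = bar^[2 * k] B') (A Z : Γ) :
    N A Z B = N A Z B' := by
  rw [fusion_eq_iterate_two_mul N bar hNbar k, h, ← fusion_eq_iterate_two_mul N bar hNbar k]

theorem Function.exists_iterate_two_mul_comp_iterate_succ [Finite Γ] :
    ∃ k j : ℕ, bar^[2 * k] ∘ bar^[j + 1] = bar^[2 * k] := by
  obtain ⟨a, b, hne, hab⟩ := Finite.exists_ne_map_eq_of_infinite fun n : ℕ => bar^[n]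
  wlog hlt : a < b generalizing a b
  · exact this b a hne.symm hab.symm (by omega)
  refine ⟨a, b - a - 1, ?_⟩
  rw [← Function.iterate_add, show 2 * a + (b - a - 1 + 1) = b + a by omega, Function.iterate_add,
    ← hab, ← Function.iterate_add, two_mul]

theorem sum_fusion_mul_eq_sum_univ {R : Type*} [Semiring R] [Fintype Γ] {K : Finset Γ}
    (hKfus : ∀ X Y Z, X ∈ K → Y ∈ K → N X Y Z ≠ 0 → Z ∈ K) {A B : Γ} (hA : A ∈ K) (hB : B ∈ K)
    (f : Γ → R) : ∑ W ∈ K, (N A B W : R) * f W = ∑ W, (N A B W : R) * f W :=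
  sum_subset (subset_univ K) fun W _ hW => by
    rw [not_imp_comm.mp (hKfus A B W hA hB) hW, Nat.cast_zero, zero_mul]

variable {R : Type*} [CommSemiring R] [Fintype Γ] (d : Γ → R) {K : Finset Γ}

theorem sum_dim_mul_fusion_bar (hdim : ∀ X Y, d X * d Y = ∑ Z, (N X Y Z : R) * d Z)
    (hKfus : ∀ X Y Z, X ∈ K → Y ∈ K → N X Y Z ≠ 0 → Z ∈ K) (hKdual : ∀ Y, Y ∈ K → bar Y ∈ K)
    (hNbar : ∀ Y Z W, N Y Z W = N (bar W) Z (bar Y)) (hdbar : ∀ Y, d (bar Y) = d Y)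
    {Z W : Γ} (hZ : Z ∈ K) (hW : W ∈ K) :
    ∑ U ∈ K, d U * (N (bar U) Z W : R) = d Z * d W := by
  obtain ⟨k, j, hkj⟩ := Function.exists_iterate_two_mul_comp_iterate_succ bar
  set V := bar^[j] W
  have hV : V ∈ K := Set.MapsTo.iterate (f := bar) (s := K) hKdual j hW
  have hdV : d V = d W := congrFun (Function.iterate_invariant (funext hdbar : d ∘ bar = d) j) W
  have hfus : ∀ U, N (bar U) Z W = N V Z U := fun U => by
    have hVW : bar^[2 * k] (bar V) = bar^[2 * k] W := by
      rw [← Function.iterate_succ_apply' bar j W, ← Function.comp_apply (f := bar^[2 * k]), hkj]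
    rw [hNbar V Z U, fusion_congr_of_iterate_two_mul_eq N bar hNbar hVW]
  calc ∑ U ∈ K, d U * (N (bar U) Z W : R)
      = ∑ U ∈ K, (N V Z U : R) * d U := sum_congr rfl fun U _ => by rw [hfus, mul_comm]
    _ = d Z * d W := by
      rw [sum_fusion_mul_eq_sum_univ N hKfus hV hZ, ← hdim, hdV, mul_comm]

theorem sum_dim_mul_S_bar_mul_S (S : Γ → Γ → R)
    (hdim : ∀ X Y, d X * d Y = ∑ Z, (N X Y Z : R) * d Z)
    (hS : ∀ X Y Z, S X Y * S X Z = d X * ∑ W, (N Y Z W : R) * S X W)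
    (hKfus : ∀ X Y Z, X ∈ K → Y ∈ K → N X Y Z ≠ 0 → Z ∈ K) (hKdual : ∀ Y, Y ∈ K → bar Y ∈ K)
    (hNbar : ∀ Y Z W, N Y Z W = N (bar W) Z (bar Y)) (hdbar : ∀ Y, d (bar Y) = d Y)
    (X : Γ) {B : Γ} (hB : B ∈ K) :
    (∑ Y ∈ K, d Y * S X (bar Y)) * S X B = d X * d B * ∑ Y ∈ K, d Y * S X Y := by
  calc (∑ Y ∈ K, d Y * S X (bar Y)) * S X B
      = ∑ Y ∈ K, ∑ W ∈ K, d X * (d Y * N (bar Y) B W * S X W) := by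
        rw [sum_mul]
        refine sum_congr rfl fun Y hY => ?_
        rw [mul_assoc, hS, ← sum_fusion_mul_eq_sum_univ N hKfus (hKdual Y hY) hB, mul_sum, mul_sum]
        exact sum_congr rfl fun W _ => by ring
    _ = d X * ∑ W ∈ K, (∑ U ∈ K, d U * N (bar U) B W) * S X W := by
        rw [sum_comm, mul_sum]
        simp only [mul_sum, sum_mul]
    _ = d X * ∑ W ∈ K, d B * d W * S X W := by
        congr 1
        exact sum_congr rfl fun W hW => by
          rw [sum_dim_mul_fusion_bar N bar d hdim hKfus hKdual hNbar hdbar hB hW]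
    _ = d X * d B * ∑ Y ∈ K, d Y * S X Y := by
        simp only [mul_assoc, mul_sum]

end FusionData

/-- Lemma 2.10 abstraction: orthogonality relation for fusion data. -/
theorem stmt_0 {Γ : Type*} [Fintype Γ]
    (N : Γ → Γ → Γ → ℕ) (d : Γ → ℂ) (S : Γ → Γ → ℂ) (bar : Γ → Γ)
    (hdim : ∀ X Y, d X * d Y = ∑ Z, (N X Y Z : ℂ) * d Z)
    (hS : ∀ X Y Z, S X Y * S X Z = d X * ∑ W, (N Y Z W : ℂ) * S X W)
    (hd0 : ∀ X, d X ≠ 0)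
    (K : Finset Γ)
    (hKfus : ∀ X Y Z, X ∈ K → Y ∈ K → N X Y Z ≠ 0 → Z ∈ K)
    (hKdual : ∀ Y, Y ∈ K → bar Y ∈ K)
    (hNbar : ∀ Y Z W, N Y Z W = N (bar W) Z (bar Y))
    (hdbar : ∀ Y, d (bar Y) = d Y) :
    ∀ X, ∀ Z ∈ K, (∑ Y ∈ K, d Y * S X Y) * (S X Z - d X * d Z) = 0 := by
  intro X Z hZ
  set T := ∑ Y ∈ K, d Y * S X Y
  set T' := ∑ Y ∈ K, d Y * S X (bar Y)
  have hT' : ∀ B ∈ K, T' * S X B = d X * d B * T :=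
    fun B hB => sum_dim_mul_S_bar_mul_S N bar d S hdim hS hKfus hKdual hNbar hdbar X hB
  have hsq : T' * T' = T' * T := by
    conv_lhs => rw [mul_sum]
    rw [mul_sum]
    refine sum_congr rfl fun Y hY => ?_
    rw [mul_left_comm, hT' _ (hKdual Y hY), hdbar, ← hT' Y hY, mul_left_comm]
  rcases eq_or_ne T' 0 with h0 | hne
  · have hT : T = 0 := by
      simpa [h0, hd0 X, hd0 Z] using (hT' Z hZ).symm
    rw [hT, zero_mul]
  · have hT : T' = T := mul_left_cancel₀ hne hsq
    rw [mul_sub, ← hT, hT' Z hZ, hT]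
    ring
end

section
/- Let n ≥ 1 and G = ℤ/2ⁿℤ. With Γ = G × G and pairing S((a,b),(c,d)) = ζ^{ad+bc}, ζ = e^{2πi/2ⁿ}: for every a, b ∈ ℤ/2ⁿℤ, the element (ja, jb) with j = 2^{n-1} satisfies j ≠ 0 and S((ja,jb),(ka,kb)) = 1 for all k ∈ ℤ/2ⁿℤ. Consequently, no cyclic subgroup of Γ of order 2ⁿ of the form {(ja,jb)} carries a nondegenerate restriction of S. -/
theorem ZMod.natCast_pow_ne_zero_of_lt {p n k : ℕ} (hp : 1 < p) (hk : k < n) :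
    (p : ZMod (p ^ n)) ^ k ≠ 0 := by
  rw [← Nat.cast_pow, Ne, ZMod.natCast_eq_zero_iff, Nat.pow_dvd_pow_iff_le_right hp]
  exact hk.not_ge

/-- Computation of Theorem 4.6(i): in `(ℤ/2ⁿℤ)²` with pairing
`S((x,y),(u,v)) = ζ^(xv+yu)`, the element `j = 2^(n-1)` is nonzero and
`(ja, jb)` pairs trivially with all `(ka, kb)`, for every `a, b`. -/
theorem stmt_6 (n : ℕ) (hn : 1 ≤ n) :
    ((2 : ZMod (2 ^ n)) ^ (n - 1) ≠ 0) ∧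
    ∀ a b k : ZMod (2 ^ n),
      Complex.exp (2 * Real.pi * Complex.I / (2 ^ n : ℕ)) ^
        (((2 : ZMod (2 ^ n)) ^ (n - 1) * a * (k * b) +
          (2 : ZMod (2 ^ n)) ^ (n - 1) * b * (k * a)).val) = 1 := by
  have hj_ne : (2 : ZMod (2 ^ n)) ^ (n - 1) ≠ 0 := by
    exact_mod_cast ZMod.natCast_pow_ne_zero_of_lt one_lt_two (Nat.sub_lt hn one_pos)
  have hj_two : (2 : ZMod (2 ^ n)) ^ (n - 1) * 2 = 0 := by
    rw [← pow_succ, Nat.sub_add_cancel hn]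
    exact_mod_cast ZMod.natCast_self (2 ^ n)
  refine ⟨hj_ne, fun a b k => ?_⟩
  have h_pairing : (2 : ZMod (2 ^ n)) ^ (n - 1) * a * (k * b) +
      (2 : ZMod (2 ^ n)) ^ (n - 1) * b * (k * a) = 0 := by
    linear_combination (a * b * k) * hj_two
  rw [h_pairing, ZMod.val_zero, pow_zero]
end

section
/- Let n ≥ 2 and G = ℤ/2ⁿℤ, Γ = G × G with pairing S((a,b),(c,d)) = ζ^{ad+bc}, ζ = e^{2πi/2ⁿ}. Then Γ admits no subgroup K with 1 < |K| < |Γ| such that S restricts nondegenerately to K and Γ ≅ K × K^⊥. In particular, every subgroup K of Γ on which S is nondegenerate satisfies K = {0} or K = Γ. -/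
/-!
Write `B` for the hyperbolic form `((a, b), (c, d)) ↦ ad + bc` and `t = 2ⁿ⁻¹`. Since
`B(t • y, z) = t * B(y, z)` vanishes exactly when `B(y, z)` is even, nondegeneracy on `K` can be
read modulo 2. A nonzero `K` contains some `w ≠ 0` with `2w = 0`, and such a `w` is orthogonal to
`2Γ`; so `K ⊄ 2Γ`, i.e. `t • y ≠ 0` for some `y ∈ K`. Nondegeneracy at `t • y` gives `z ∈ K` with
`B(y, z)` odd. As `det(y, z) ≡ B(y, z) mod 2`, the determinant is a unit, so `y, z` span `Γ`.
-/

namespace ZMod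

variable {n : ℕ}

theorem even_iff_two_dvd_val (hn : n ≠ 0) (a : ZMod (2 ^ n)) : Even a ↔ 2 ∣ a.val := by
  constructor
  · rintro ⟨r, rfl⟩
    rw [val_add, Nat.dvd_mod_iff (dvd_pow_self 2 hn), ← two_mul]
    exact dvd_mul_right 2 _
  · rintro ⟨k, hk⟩
    exact ⟨k, by rw [← natCast_zmod_val a, hk]; push_cast; ring⟩

theorem isUnit_iff_not_even (hn : n ≠ 0) (a : ZMod (2 ^ n)) : IsUnit a ↔ ¬Even a := by
  rw [even_iff_two_dvd_val hn, ← natCast_zmod_val a, val_natCast_of_lt (val_lt a),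
    isUnit_natCast_iff_not_dvd_pow Nat.prime_two (Nat.pos_of_ne_zero hn)]

theorem two_pow_pred_mul_eq_zero_iff_even (hn : n ≠ 0) (a : ZMod (2 ^ n)) :
    2 ^ (n - 1) * a = 0 ↔ Even a := by
  have hcast : 2 ^ (n - 1) * a = ((2 ^ (n - 1) * a.val : ℕ) : ZMod (2 ^ n)) := by
    push_cast [natCast_zmod_val]; rfl
  obtain ⟨m, rfl⟩ := Nat.exists_eq_add_one_of_ne_zero hn
  rw [hcast, natCast_eq_zero_iff, even_iff_two_dvd_val hn, Nat.add_sub_cancel]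
  generalize a.val = k
  rw [pow_succ, Nat.mul_dvd_mul_iff_left (by positivity)]

end ZMod

theorem exists_pow_nsmul_ne_zero_of_pow_nsmul_eq_zero {M : Type*} [AddMonoid M] {p k : ℕ} {x : M}
    (hx : x ≠ 0) (hk : p ^ k • x = 0) : ∃ m, p ^ m • x ≠ 0 ∧ p • p ^ m • x = 0 := by
  induction k with
  | zero => simp_all
  | succ k ih =>
    by_cases h : p ^ k • x = 0
    · exact ih h
    · exact ⟨k, h, by rwa [← mul_nsmul', ← pow_succ']⟩

def hyperbolicForm (R : Type*) [CommRing R] : LinearMap.BilinForm R (R × R) :=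
  LinearMap.mk₂ R (fun x y => x.1 * y.2 + x.2 * y.1)
    (fun _ _ _ => by simp only [Prod.fst_add, Prod.snd_add]; ring)
    (fun _ _ _ => by simp only [Prod.smul_fst, Prod.smul_snd, smul_eq_mul]; ring)
    (fun _ _ _ => by simp only [Prod.fst_add, Prod.snd_add]; ring)
    (fun _ _ _ => by simp only [Prod.smul_fst, Prod.smul_snd, smul_eq_mul]; ring)

@[simp]
theorem hyperbolicForm_apply {R : Type*} [CommRing R] (x y : R × R) :
    hyperbolicForm R x y = x.1 * y.2 + x.2 * y.1 := rfl

theorem Submodule.eq_top_of_isUnit_det {R : Type*} [CommRing R] {N : Submodule R (R × R)}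
    {y z : R × R} (hy : y ∈ N) (hz : z ∈ N) (hdet : IsUnit (y.1 * z.2 - y.2 * z.1)) : N = ⊤ := by
  obtain ⟨d, hd⟩ := hdet.exists_left_inv
  rw [eq_top_iff']
  intro p
  have hp : p = (d * (p.1 * z.2 - p.2 * z.1)) • y + (d * (p.2 * y.1 - p.1 * y.2)) • z := by
    ext
    · simp only [Prod.fst_add, Prod.smul_fst, smul_eq_mul]; linear_combination (-p.1) * hd
    · simp only [Prod.snd_add, Prod.smul_snd, smul_eq_mul]; linear_combination (-p.2) * hd
  rw [hp]
  exact N.add_mem (N.smul_mem _ hy) (N.smul_mem _ hz)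

section

variable {n : ℕ} {N : Submodule (ZMod (2 ^ n)) (ZMod (2 ^ n) × ZMod (2 ^ n))}

theorem exists_mem_two_pow_pred_smul_ne_zero (hn : n ≠ 0)
    (hN : ∀ x ∈ N, (∀ y ∈ N, hyperbolicForm _ x y = 0) → x = 0) (hbot : N ≠ ⊥) :
    ∃ y ∈ N, (2 ^ (n - 1) : ZMod (2 ^ n)) • y ≠ 0 := by
  obtain ⟨x, hx, hx0⟩ := N.ne_bot_iff.1 hbot
  have hpow : 2 ^ n • x = 0 := by
    rw [← Nat.cast_smul_eq_nsmul (ZMod (2 ^ n)), ZMod.natCast_self, zero_smul]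
  obtain ⟨m, hw0, hw2⟩ := exists_pow_nsmul_ne_zero_of_pow_nsmul_eq_zero hx0 hpow
  set w := 2 ^ m • x
  by_contra! hN2
  refine hw0 (hN w (N.nsmul_mem hx _) fun y hy => ?_)
  obtain ⟨⟨r, hr⟩, ⟨s, hs⟩⟩ : Even y.1 ∧ Even y.2 := by
    simpa only [Prod.ext_iff, Prod.smul_fst, Prod.smul_snd, smul_eq_mul, Prod.fst_zero,
      Prod.snd_zero, ZMod.two_pow_pred_mul_eq_zero_iff_even hn] using hN2 y hy
  rw [two_nsmul] at hw2
  calc hyperbolicForm _ w y = hyperbolicForm _ (w + w) (r, s) := by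
        simp only [hyperbolicForm_apply, hr, hs, Prod.fst_add, Prod.snd_add]; ring
    _ = 0 := by rw [hw2, LinearMap.map_zero₂]

theorem exists_mem_not_even_hyperbolicForm (hn : n ≠ 0)
    (hN : ∀ x ∈ N, (∀ y ∈ N, hyperbolicForm _ x y = 0) → x = 0) {y : ZMod (2 ^ n) × ZMod (2 ^ n)}
    (hy : y ∈ N) (hty : (2 ^ (n - 1) : ZMod (2 ^ n)) • y ≠ 0) :
    ∃ z ∈ N, ¬Even (hyperbolicForm _ y z) := by
  by_contra! h
  refine hty (hN _ (N.smul_mem _ hy) fun z hz => ?_)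
  rw [LinearMap.map_smul₂, smul_eq_mul, ZMod.two_pow_pred_mul_eq_zero_iff_even hn]
  exact h z hz

theorem eq_bot_or_eq_top_of_hyperbolicForm_nondegenerate (hn : n ≠ 0)
    (hN : ∀ x ∈ N, (∀ y ∈ N, hyperbolicForm _ x y = 0) → x = 0) : N = ⊥ ∨ N = ⊤ := by
  refine or_iff_not_imp_left.2 fun hbot => ?_
  obtain ⟨y, hy, hty⟩ := exists_mem_two_pow_pred_smul_ne_zero hn hN hbot
  obtain ⟨z, hz, hyz⟩ := exists_mem_not_even_hyperbolicForm hn hN hy hty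
  refine N.eq_top_of_isUnit_det hy hz ((ZMod.isUnit_iff_not_even hn _).2 fun hdet => hyz ?_)
  have : hyperbolicForm _ y z = (y.1 * z.2 - y.2 * z.1) + (y.2 * z.1 + y.2 * z.1) := by
    rw [hyperbolicForm_apply]; ring
  exact this ▸ hdet.add ⟨_, rfl⟩

end

theorem IsPrimitiveRoot.pow_val_eq_one_iff {M : Type*} [CommMonoid M] {m : ℕ} [NeZero m] {ζ : M}
    (hζ : IsPrimitiveRoot ζ m) (a : ZMod m) : ζ ^ a.val = 1 ↔ a = 0 := by
  rw [hζ.pow_eq_one_iff_dvd, ← ZMod.natCast_eq_zero_iff, ZMod.natCast_zmod_val]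

theorem stmt_16_general (n : ℕ) (hn : 2 ≤ n)
    (pair : (ZMod (2 ^ n) × ZMod (2 ^ n)) → (ZMod (2 ^ n) × ZMod (2 ^ n)) → ℂ)
    (hpair : ∀ x y, pair x y =
      Complex.exp (2 * Real.pi * Complex.I / (2 ^ n : ℕ)) ^
        ((x.1 * y.2 + x.2 * y.1).val))
    (perp : AddSubgroup (ZMod (2 ^ n) × ZMod (2 ^ n)) →
            AddSubgroup (ZMod (2 ^ n) × ZMod (2 ^ n))) :
    (¬ ∃ K : AddSubgroup (ZMod (2 ^ n) × ZMod (2 ^ n)),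
        1 < Nat.card K ∧ Nat.card K < Nat.card (ZMod (2 ^ n) × ZMod (2 ^ n)) ∧
        (∀ x ∈ K, (∀ y ∈ K, pair x y = 1) → x = 0) ∧
        Nonempty ((ZMod (2 ^ n) × ZMod (2 ^ n)) ≃+ (K × perp K))) ∧
    ∀ K : AddSubgroup (ZMod (2 ^ n) × ZMod (2 ^ n)),
      (∀ x ∈ K, (∀ y ∈ K, pair x y = 1) → x = 0) → K = ⊥ ∨ K = ⊤ := by
  have hζ := Complex.isPrimitiveRoot_exp (2 ^ n) (pow_ne_zero n two_ne_zero)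
  have pair_eq_one_iff (x y) : pair x y = 1 ↔ hyperbolicForm _ x y = 0 := by
    rw [hpair, hζ.pow_val_eq_one_iff, hyperbolicForm_apply]
  have eq_bot_or_eq_top (K : AddSubgroup (ZMod (2 ^ n) × ZMod (2 ^ n)))
      (hK : ∀ x ∈ K, (∀ y ∈ K, pair x y = 1) → x = 0) : K = ⊥ ∨ K = ⊤ := by
    have := eq_bot_or_eq_top_of_hyperbolicForm_nondegenerate (N := K.toZModSubmodule _)
      (by omega) fun x hx h => hK x hx fun y hy => (pair_eq_one_iff x y).2 (h y hy)
    simpa only [map_eq_bot_iff, map_eq_top_iff] using this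
  refine ⟨?_, eq_bot_or_eq_top⟩
  rintro ⟨K, hK1, hKΓ, hK, -⟩
  rcases eq_bot_or_eq_top K hK with rfl | rfl
  · simp at hK1
  · simp at hKΓ

/-- Group-theoretic content of Theorem 4.6(i): for `Γ = (ℤ/2ⁿℤ)²` with the
pairing `S((a,b),(c,d)) = ζ^(ad+bc)`, no proper nontrivial subgroup carries a
nondegenerate restriction of `S` and splits `Γ` as `K × K^⊥`; in particular
every subgroup on which `S` is nondegenerate is trivial or everything. -/
theorem stmt_16 (n : ℕ) (hn : 2 ≤ n)
    (pair : (ZMod (2 ^ n) × ZMod (2 ^ n)) → (ZMod (2 ^ n) × ZMod (2 ^ n)) → ℂ)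
    (hpair : ∀ x y, pair x y =
      Complex.exp (2 * Real.pi * Complex.I / (2 ^ n : ℕ)) ^
        ((x.1 * y.2 + x.2 * y.1).val))
    (perp : AddSubgroup (ZMod (2 ^ n) × ZMod (2 ^ n)) →
            AddSubgroup (ZMod (2 ^ n) × ZMod (2 ^ n)))
    (hperp : ∀ K x, x ∈ perp K ↔ ∀ y ∈ K, pair x y = 1) :
    (¬ ∃ K : AddSubgroup (ZMod (2 ^ n) × ZMod (2 ^ n)),
        1 < Nat.card K ∧ Nat.card K < Nat.card (ZMod (2 ^ n) × ZMod (2 ^ n)) ∧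
        (∀ x ∈ K, (∀ y ∈ K, pair x y = 1) → x = 0) ∧
        Nonempty ((ZMod (2 ^ n) × ZMod (2 ^ n)) ≃+ (K × perp K))) ∧
    ∀ K : AddSubgroup (ZMod (2 ^ n) × ZMod (2 ^ n)),
      (∀ x ∈ K, (∀ y ∈ K, pair x y = 1) → x = 0) → K = ⊥ ∨ K = ⊤ :=
  stmt_16_general n hn pair hpair perp
end
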